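/- arXiv:2304.09496 — 2 statements merged into one kernel-verified Lean document; each statement's English description precedes it below -/
import Mathlib

section
/- Let d, m ∈ ℕ with d, m ≥ 1, T > 0, 0 < Δt ≤ T, K > 0, and let A, B_1, …, B_m be real d×d matrices. Let F, g_1, …, g_m : ℝ^d → ℝ^d satisfy ‖F(y) − F(z)‖ ≤ K(1 + ‖y‖^{2r} + ‖z‖^{2r})‖y − z‖ with z = 0, i.e. ‖F(y) − F(0)‖ ≤ K(1 + ‖y‖^{2r})‖y‖ for all y, and ‖g_i(y) − g_i(z)‖ ≤ K‖y − z‖ for all y, z and all i. Let α : (0,∞) × ℝ^d → ℝ satisfy 0 ≤ α(Δt, y) ≤ 1 for all y. Let Y ∈ ℝ^d with ‖Y‖ ≤ 1 and w ∈ ℝ^m with ‖w‖ ≤ 1, and set Y⁺ := S(Δt, w)·( Y + (α(Δt, Y)F(Y) − Σ_{i=1}^m B_i g_i(Y)) Δt + Σ_{i=1}^m g_i(Y) w_i ). Then ‖Y⁺‖ ≤ λ₀, where λ₀ := exp( Σ_{i=1}^m ‖B_i‖ + T‖A − (1/2)Σ_{i=1}^m B_i²‖ ) · ( 1 + 2TK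 + T‖F(0)‖ + TK Σ_{i=1}^m ‖B_i‖ + T‖Σ_{i=1}^m B_i g_i(0)‖ + mK + Σ_{i=1}^m ‖g_i(0)‖ ). -/
noncomputable section

/-- The GBM solution operator `S(h, w) = exp((A − ½ Σᵢ Bᵢ²) h + Σᵢ wᵢ Bᵢ)`. -/
def gbmOp {d m : ℕ} (A : EuclideanSpace ℝ (Fin d) →L[ℝ] EuclideanSpace ℝ (Fin d))
    (B : Fin m → (EuclideanSpace ℝ (Fin d) →L[ℝ] EuclideanSpace ℝ (Fin d)))
    (h : ℝ) (w : Fin m → ℝ) : EuclideanSpace ℝ (Fin d) →L[ℝ] EuclideanSpace ℝ (Fin d) :=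
  NormedSpace.exp (h • (A - (1 / 2 : ℝ) • ∑ i, B i ^ 2) + ∑ i, w i • B i)

/-!
On the event `‖Y‖ ≤ 1`, `‖w‖ ≤ 1` the generator of `S(Δt, w)` has norm at most
`Σ ‖Bᵢ‖ + T ‖A − ½ Σ Bᵢ²‖`, and `‖exp M‖ ≤ e^‖M‖`. The argument of `S` is bounded term by term:
each of `F`, `gᵢ` differs from its value at `0` by at most a multiple of `K` on the unit ball.
-/

open Finset

-- `‖1‖ ≤ 1` rather than `NormOneClass`: the operator algebra of the zero space has `‖1‖ = 0`.
theorem norm_pow_le_pow_norm_of_norm_one_le {𝔸 : Type*} [NormedRing 𝔸] (h1 : ‖(1 : 𝔸)‖ ≤ 1)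
    (x : 𝔸) :
    ∀ n : ℕ, ‖x ^ n‖ ≤ ‖x‖ ^ n
  | 0 => by simpa using h1
  | n + 1 => norm_pow_le' x n.succ_pos

theorem norm_exp_le_exp_norm_of_norm_one_le {𝔸 : Type*} [NormedRing 𝔸] [NormedAlgebra ℝ 𝔸]
    [CompleteSpace 𝔸] (h1 : ‖(1 : 𝔸)‖ ≤ 1) (x : 𝔸) :
    ‖NormedSpace.exp x‖ ≤ Real.exp ‖x‖ := by
  rw [NormedSpace.exp_eq_tsum ℝ, Real.exp_eq_exp_ℝ]
  refine tsum_of_norm_bounded (NormedSpace.expSeries_div_hasSum_exp ‖x‖) fun n => ?_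
  rw [norm_smul, norm_inv, RCLike.norm_natCast, inv_mul_eq_div]
  gcongr
  exact norm_pow_le_pow_norm_of_norm_one_le h1 x n

theorem norm_gbmOp_le_exp {d m : ℕ} (A : EuclideanSpace ℝ (Fin d) →L[ℝ] EuclideanSpace ℝ (Fin d))
    (B : Fin m → (EuclideanSpace ℝ (Fin d) →L[ℝ] EuclideanSpace ℝ (Fin d)))
    (h : ℝ) (w : Fin m → ℝ) :
    ‖gbmOp A B h w‖ ≤
      Real.exp (|h| * ‖A - (1 / 2 : ℝ) • ∑ i, B i ^ 2‖ + ∑ i, |w i| * ‖B i‖) := by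
  refine (norm_exp_le_exp_norm_of_norm_one_le ContinuousLinearMap.norm_id_le _).trans ?_
  gcongr
  refine (norm_add_le _ _).trans (add_le_add (norm_smul _ _).le ((norm_sum_le _ _).trans ?_))
  simp only [norm_smul, Real.norm_eq_abs, le_refl]

theorem norm_le_of_growth_of_norm_le_one {E : Type*} [SeminormedAddCommGroup E] {F : E → E}
    {K r : ℝ} {y : E} (hK : 0 ≤ K) (hr : 0 ≤ r) (hF : ‖F y - F 0‖ ≤ K * (1 + ‖y‖ ^ (2 * r)) * ‖y‖) (hy : ‖y‖ ≤ 1) :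
    ‖F y‖ ≤ 2 * K + ‖F 0‖ := by
  have hpow : ‖y‖ ^ (2 * r) ≤ 1 := Real.rpow_le_one (norm_nonneg y) hy (by positivity)
  have hgrowth : K * (1 + ‖y‖ ^ (2 * r)) * ‖y‖ ≤ K * 2 * 1 := by gcongr; linarith
  linarith [norm_le_norm_add_norm_sub' (F y) (F 0)]

section Increment

variable {E : Type*} [NormedAddCommGroup E] [NormedSpace ℝ E] {ι : Type*} [Fintype ι]

theorem norm_sum_apply_le {B : ι → E →L[ℝ] E} {g : ι → E → E} {y : E} {c : ℝ}
    (hg : ∀ i, ‖g i y - g i 0‖ ≤ c) :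
    ‖∑ i, B i (g i y)‖ ≤ c * ∑ i, ‖B i‖ + ‖∑ i, B i (g i 0)‖ := by
  have hsplit : ∑ i, B i (g i y) = ∑ i, B i (g i y - g i 0) + ∑ i, B i (g i 0) := by
    simp only [map_sub, sum_sub_distrib, sub_add_cancel]
  rw [hsplit, mul_sum]
  refine (norm_add_le _ _).trans (add_le_add_left ((norm_sum_le _ _).trans ?_) _)
  refine sum_le_sum fun i _ => ((B i).le_opNorm _).trans ?_
  rw [mul_comm]
  gcongr
  exact hg i

theorem norm_sum_smul_le_of_abs_le_one {w : ι → ℝ} {g : ι → E → E} {y : E} {c : ℝ}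
    (hw : ∀ i, |w i| ≤ 1) (hg : ∀ i, ‖g i y - g i 0‖ ≤ c) :
    ‖∑ i, w i • g i y‖ ≤ Fintype.card ι * c + ∑ i, ‖g i 0‖ := by
  refine (norm_sum_le _ _).trans ?_
  rw [← card_univ, ← nsmul_eq_mul, ← sum_const, ← sum_add_distrib]
  refine sum_le_sum fun i _ => ?_
  rw [norm_smul, Real.norm_eq_abs]
  refine (mul_le_of_le_one_left (norm_nonneg _) (hw i)).trans ?_
  linarith [norm_le_norm_add_norm_sub' (g i y) (g i 0), hg i]

end Increment

theorem tamed_gbm_one_step_bound_small_general {d m : ℕ}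
    (T Δt r K : ℝ) (hΔt : 0 < Δt) (hΔtT : Δt ≤ T) (hr : 0 ≤ r) (hK : 0 < K)
    (A : EuclideanSpace ℝ (Fin d) →L[ℝ] EuclideanSpace ℝ (Fin d))
    (B : Fin m → (EuclideanSpace ℝ (Fin d) →L[ℝ] EuclideanSpace ℝ (Fin d)))
    (F : EuclideanSpace ℝ (Fin d) → EuclideanSpace ℝ (Fin d))
    (g : Fin m → EuclideanSpace ℝ (Fin d) → EuclideanSpace ℝ (Fin d))
    (hF : ∀ y : EuclideanSpace ℝ (Fin d), ‖F y - F 0‖ ≤ K * (1 + ‖y‖ ^ (2 * r)) * ‖y‖)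
    (hg : ∀ i, ∀ y z : EuclideanSpace ℝ (Fin d), ‖g i y - g i z‖ ≤ K * ‖y - z‖)
    (α : ℝ → EuclideanSpace ℝ (Fin d) → ℝ)
    (hα : ∀ y, 0 ≤ α Δt y ∧ α Δt y ≤ 1)
    (Y : EuclideanSpace ℝ (Fin d)) (hY : ‖Y‖ ≤ 1)
    (w : EuclideanSpace ℝ (Fin m)) (hw : ‖w‖ ≤ 1)
    (lam0 : ℝ)
    (hlam0 : lam0 =
      Real.exp ((∑ i, ‖B i‖) + T * ‖A - (1 / 2 : ℝ) • ∑ i, B i ^ 2‖) *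
        (1 + 2 * T * K + T * ‖F 0‖ + T * K * (∑ i, ‖B i‖) + T * ‖∑ i, B i (g i 0)‖
          + (m : ℝ) * K + ∑ i, ‖g i 0‖)) :
    ‖gbmOp A B Δt (fun i => w i)
        (Y + Δt • (α Δt Y • F Y - ∑ i, B i (g i Y)) + ∑ i, w i • g i Y)‖ ≤ lam0 := by
  subst hlam0
  have hwi : ∀ i, |w i| ≤ 1 := fun i => (PiLp.norm_apply_le w i).trans hw
  have hgY : ∀ i, ‖g i Y - g i 0‖ ≤ K := fun i =>
    (hg i Y 0).trans (by rw [sub_zero]; exact mul_le_of_le_one_right hK.le hY)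
  have hS : ‖gbmOp A B Δt (fun i => w i)‖ ≤
      Real.exp ((∑ i, ‖B i‖) + T * ‖A - (1 / 2 : ℝ) • ∑ i, B i ^ 2‖) := by
    refine (norm_gbmOp_le_exp A B Δt _).trans (Real.exp_le_exp.2 ?_)
    rw [add_comm, abs_of_pos hΔt]
    gcongr with i
    exact mul_le_of_le_one_left (norm_nonneg _) (hwi i)
  have hαF : ‖α Δt Y • F Y‖ ≤ 2 * K + ‖F 0‖ := by
    rw [norm_smul, Real.norm_eq_abs, abs_of_nonneg (hα Y).1]
    exact mul_le_of_le_one_left (norm_nonneg _) (hα Y).2 |>.trans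
      (norm_le_of_growth_of_norm_le_one hK.le hr (hF Y) hY)
  have hdrift : ‖Δt • (α Δt Y • F Y - ∑ i, B i (g i Y))‖ ≤
      T * (2 * K + ‖F 0‖ + (K * ∑ i, ‖B i‖ + ‖∑ i, B i (g i 0)‖)) := by
    rw [norm_smul, Real.norm_eq_abs, abs_of_pos hΔt]
    gcongr
    · exact hΔt.le.trans hΔtT
    · exact (norm_sub_le _ _).trans (add_le_add hαF (norm_sum_apply_le hgY))
  have hnoise := norm_sum_smul_le_of_abs_le_one hwi hgY
  rw [Fintype.card_fin] at hnoise
  refine (ContinuousLinearMap.le_opNorm _ _).trans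
    (mul_le_mul hS ?_ (norm_nonneg _) (Real.exp_pos _).le)
  linarith [norm_add₃_le (a := Y) (b := Δt • (α Δt Y • F Y - ∑ i, B i (g i Y)))
    (c := ∑ i, w i • g i Y)]

/-- One-step bound for the tamed GBM scheme on the event
`{‖Y‖ ≤ 1, ‖w‖ ≤ 1}`: the next iterate satisfies `‖Y⁺‖ ≤ λ₀` with the explicit constant `λ₀`. -/
theorem tamed_gbm_one_step_bound_small {d m : ℕ} (hd : 1 ≤ d) (hm : 1 ≤ m)
    (T Δt r K : ℝ) (hT : 0 < T) (hΔt : 0 < Δt) (hΔtT : Δt ≤ T) (hr : 0 ≤ r) (hK : 0 < K)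
    (A : EuclideanSpace ℝ (Fin d) →L[ℝ] EuclideanSpace ℝ (Fin d))
    (B : Fin m → (EuclideanSpace ℝ (Fin d) →L[ℝ] EuclideanSpace ℝ (Fin d)))
    (F : EuclideanSpace ℝ (Fin d) → EuclideanSpace ℝ (Fin d))
    (g : Fin m → EuclideanSpace ℝ (Fin d) → EuclideanSpace ℝ (Fin d))
    (hF : ∀ y : EuclideanSpace ℝ (Fin d), ‖F y - F 0‖ ≤ K * (1 + ‖y‖ ^ (2 * r)) * ‖y‖)
    (hg : ∀ i, ∀ y z : EuclideanSpace ℝ (Fin d), ‖g i y - g i z‖ ≤ K * ‖y - z‖)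
    (α : ℝ → EuclideanSpace ℝ (Fin d) → ℝ)
    (hα : ∀ y, 0 ≤ α Δt y ∧ α Δt y ≤ 1)
    (Y : EuclideanSpace ℝ (Fin d)) (hY : ‖Y‖ ≤ 1)
    (w : EuclideanSpace ℝ (Fin m)) (hw : ‖w‖ ≤ 1)
    (lam0 : ℝ)
    (hlam0 : lam0 =
      Real.exp ((∑ i, ‖B i‖) + T * ‖A - (1 / 2 : ℝ) • ∑ i, B i ^ 2‖) *
        (1 + 2 * T * K + T * ‖F 0‖ + T * K * (∑ i, ‖B i‖) + T * ‖∑ i, B i (g i 0)‖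
          + (m : ℝ) * K + ∑ i, ‖g i 0‖)) :
    ‖gbmOp A B Δt (fun i => w i)
        (Y + Δt • (α Δt Y • F Y - ∑ i, B i (g i Y)) + ∑ i, w i • g i Y)‖ ≤ lam0 :=
  tamed_gbm_one_step_bound_small_general T Δt r K hΔt hΔtT hr hK A B F g hF hg α hα Y hY w hw lam0
    hlam0
end
end

section
/- Let d, m ∈ ℕ with d, m ≥ 1, T > 0, p ≥ 2, K > 0, and let A, B_1, …, B_m be real d×d matrices satisfying A B_i = B_i A and B_i B_j = B_j B_i for all i, j. Let F, g_1, …, g_m : ℝ^d → ℝ^d with ‖g_i(y) − g_i(z)‖ ≤ K‖y − z‖ for all y, z and all i, and let α : (0,∞) × ℝ^d → ℝ satisfy 0 ≤ α(h, y) ≤ 1 and h‖α(h, y)F(y)‖ ≤ 1 for all y and all h > 0. Then there exists a constant C = C(T, p, m, K, ‖A‖, ‖B_1‖,…,‖B_m‖, ‖g_1(0)‖,…,‖g_m(0)‖) > 0 such that for every h ∈ (0, T], every ℝ^d-valued random vector Y on a probability space (Ω, 𝔽, ℙ) with 𝔼[‖Y‖^p] < ∞, and every family ξ_1, …, ξ_m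 of independent real Gaussian random variables with mean 0 and variance h, independent of Y, the random vector Ȳ := S(h, ξ)·( Y + h (α(h, Y)F(Y) − Σ_{i=1}^m B_i g_i(Y)) + Σ_{i=1}^m g_i(Y) ξ_i ) satisfies (𝔼[‖Ȳ‖^p])^{2/p} ≤ C ( 1 + (𝔼[‖Y‖^p])^{2/p} ). -/
/-!
Since `S(h, w)` is an exponential, `‖S(h, w)‖ ≤ exp (h ‖A − ½ Σᵢ Bᵢ²‖ + Σᵢ |wᵢ| · Σᵢ ‖Bᵢ‖)`.
The taming `h ‖α F‖ ≤ 1` and the linear growth of the Lipschitz `gᵢ` bound the argument of `S`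
by `D (1 + Σᵢ |wᵢ|) (1 + ‖y‖)`, so pointwise `‖Ȳ‖ ≤ a exp (κ Σᵢ |ξᵢ|) (1 + ‖Y‖)` with `a, κ`
independent of `h ≤ T`. After raising to the power `p`, independence of `Y` and `ξ` splits the
expectation, independence of the `ξᵢ` factorises the exponential moment, and a centred Gaussian
of variance `h` has `𝔼 exp (t |ξᵢ|) ≤ 2 exp (h t² / 2)`. Finally `(c (1 + x)) ^ (2/p) ≤
c (1 + x ^ (2/p))` for `c ≥ 1`, as `2/p ≤ 1`.
-/

open MeasureTheory ProbabilityTheory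
open scoped NNReal ENNReal

noncomputable section

theorem ContinuousLinearMap.norm_exp_le_exp_norm {E : Type*} [NormedAddCommGroup E]
    [NormedSpace ℝ E] (M : E →L[ℝ] E) : ‖NormedSpace.exp M‖ ≤ Real.exp ‖M‖ := by
  have hsum := NormedSpace.norm_expSeries_summable' (𝕂 := ℝ) M
  rw [NormedSpace.exp_eq_tsum ℝ, Real.exp_eq_exp_ℝ, NormedSpace.exp_eq_tsum_div]
  refine (norm_tsum_le_tsum_norm hsum).trans
    (hsum.tsum_le_tsum (fun n => ?_) (Real.summable_pow_div_factorial ‖M‖))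
  rw [norm_smul, norm_inv, Real.norm_natCast, inv_mul_eq_div]
  gcongr
  rcases n.eq_zero_or_pos with rfl | hn
  · simpa [ContinuousLinearMap.one_def] using ContinuousLinearMap.norm_id_le
  · exact norm_pow_le' M hn

theorem norm_sum_smul_le {ι E : Type*} [Fintype ι] [SeminormedAddCommGroup E] [NormedSpace ℝ E]
    (w : ι → ℝ) {v : ι → E} {M : ℝ} (hv : ∀ i, ‖v i‖ ≤ M) :
    ‖∑ i, w i • v i‖ ≤ (∑ i, |w i|) * M := by
  rw [Finset.sum_mul]
  refine (norm_sum_le _ _).trans (Finset.sum_le_sum fun i _ => ?_)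
  rw [norm_smul, Real.norm_eq_abs]
  exact mul_le_mul_of_nonneg_left (hv i) (abs_nonneg _)

theorem norm_gbmOp_le {d m : ℕ} (A : EuclideanSpace ℝ (Fin d) →L[ℝ] EuclideanSpace ℝ (Fin d))
    (B : Fin m → (EuclideanSpace ℝ (Fin d) →L[ℝ] EuclideanSpace ℝ (Fin d)))
    {h : ℝ} (hh : 0 ≤ h) (w : Fin m → ℝ) :
    ‖gbmOp A B h w‖ ≤
      Real.exp (h * ‖A - (1 / 2 : ℝ) • ∑ i, B i ^ 2‖ + (∑ i, |w i|) * ∑ i, ‖B i‖) := by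
  refine (ContinuousLinearMap.norm_exp_le_exp_norm _).trans (Real.exp_le_exp.mpr ?_)
  refine (norm_add_le _ _).trans (add_le_add ?_ ?_)
  · rw [norm_smul, Real.norm_of_nonneg hh]
  · exact norm_sum_smul_le w fun i =>
      Finset.single_le_sum (fun j _ => norm_nonneg (B j)) (Finset.mem_univ i)

theorem norm_le_mul_one_add_norm_of_lipschitz {E F : Type*} [SeminormedAddCommGroup E]
    [SeminormedAddCommGroup F] {f : E → F} {K : ℝ} (hK : 0 ≤ K)
    (hf : ∀ y z, ‖f y - f z‖ ≤ K * ‖y - z‖) (y : E) :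
    ‖f y‖ ≤ (K + ‖f 0‖) * (1 + ‖y‖) := by
  have h0 : ‖f y‖ ≤ K * ‖y‖ + ‖f 0‖ := by
    simpa using (norm_le_norm_sub_add (f y) (f 0)).trans (add_le_add_left (hf y 0) _)
  nlinarith [norm_nonneg y, norm_nonneg (f 0)]

theorem norm_tamed_increment_le {ι E : Type*} [Fintype ι] [NormedAddCommGroup E]
    [NormedSpace ℝ E] (B : ι → E →L[ℝ] E) (w : ι → ℝ) {v : ι → E} {h T L : ℝ}
    (hh : 0 ≤ h) (hhT : h ≤ T) (hL : 0 ≤ L) {u y : E} (hu : h * ‖u‖ ≤ 1)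
    (hv : ∀ i, ‖v i‖ ≤ L * (1 + ‖y‖)) :
    ‖y + h • (u - ∑ i, B i (v i)) + ∑ i, w i • v i‖
      ≤ (1 + (T * ∑ i, ‖B i‖ + 1) * L) * (1 + ∑ i, |w i|) * (1 + ‖y‖) := by
  set G := L * (1 + ‖y‖)
  have hS : ‖∑ i, B i (v i)‖ ≤ (∑ i, ‖B i‖) * G := by
    rw [Finset.sum_mul]
    exact (norm_sum_le _ _).trans (Finset.sum_le_sum fun i _ => (B i).le_opNorm_of_le (hv i))
  have hW : ‖∑ i, w i • v i‖ ≤ (∑ i, |w i|) * G := norm_sum_smul_le w hv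
  have hsplit : ‖y + h • (u - ∑ i, B i (v i)) + ∑ i, w i • v i‖
      ≤ ‖y‖ + (h * ‖u‖ + h * ‖∑ i, B i (v i)‖) + ‖∑ i, w i • v i‖ := by
    refine norm_add₃_le.trans (add_le_add_left (add_le_add_right ?_ _) _)
    rw [norm_smul, Real.norm_of_nonneg hh, ← mul_add]
    exact mul_le_mul_of_nonneg_left (norm_sub_le _ _) hh
  have hcB : 0 ≤ ∑ i, ‖B i‖ := Finset.sum_nonneg fun i _ => norm_nonneg _
  have hs : 0 ≤ ∑ i, |w i| := Finset.sum_nonneg fun i _ => abs_nonneg _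
  have hG : 0 ≤ G := mul_nonneg hL (by positivity)
  have hhS : h * ‖∑ i, B i (v i)‖ ≤ T * ((∑ i, ‖B i‖) * G) :=
    mul_le_mul hhT hS (norm_nonneg _) (hh.trans hhT)
  nlinarith [norm_nonneg y, mul_nonneg (mul_nonneg (hh.trans hhT) hcB) (mul_nonneg hG hs),
    mul_nonneg hs (norm_nonneg y), mul_nonneg hs hG]

theorem norm_gbmOp_tamed_le {d m : ℕ}
    (A : EuclideanSpace ℝ (Fin d) →L[ℝ] EuclideanSpace ℝ (Fin d))
    (B : Fin m → (EuclideanSpace ℝ (Fin d) →L[ℝ] EuclideanSpace ℝ (Fin d)))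
    (w : Fin m → ℝ) {v : Fin m → EuclideanSpace ℝ (Fin d)} {h T L : ℝ}
    (hh : 0 ≤ h) (hhT : h ≤ T) (hL : 0 ≤ L) {u y : EuclideanSpace ℝ (Fin d)}
    (hu : h * ‖u‖ ≤ 1) (hv : ∀ i, ‖v i‖ ≤ L * (1 + ‖y‖)) :
    ‖gbmOp A B h w (y + h • (u - ∑ i, B i (v i)) + ∑ i, w i • v i)‖
      ≤ (1 + (T * ∑ i, ‖B i‖ + 1) * L) * Real.exp (T * ‖A - (1 / 2 : ℝ) • ∑ i, B i ^ 2‖)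
        * Real.exp ((∑ i, ‖B i‖ + 1) * ∑ i, |w i|) * (1 + ‖y‖) := by
  set cA := ‖A - (1 / 2 : ℝ) • ∑ i, B i ^ 2‖
  set cB := ∑ i, ‖B i‖
  set s := ∑ i, |w i|
  have hD : 0 ≤ 1 + (T * cB + 1) * L := by
    have : 0 ≤ cB := Finset.sum_nonneg fun i _ => norm_nonneg _
    have : 0 ≤ T := hh.trans hhT
    positivity
  have hop : ‖gbmOp A B h w‖ ≤ Real.exp (T * cA) * Real.exp (s * cB) := by
    rw [← Real.exp_add]
    exact (norm_gbmOp_le A B hh w).trans (Real.exp_le_exp.mpr (by gcongr))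
  have hs : 1 + s ≤ Real.exp s := by linarith [Real.add_one_le_exp s]
  calc _ ≤ Real.exp (T * cA) * Real.exp (s * cB)
          * ((1 + (T * cB + 1) * L) * (1 + s) * (1 + ‖y‖)) :=
        (gbmOp A B h w).le_opNorm_of_le (norm_tamed_increment_le B w hh hhT hL hu hv) |>.trans
          (mul_le_mul_of_nonneg_right hop (by positivity))
    _ ≤ Real.exp (T * cA) * Real.exp (s * cB)
          * ((1 + (T * cB + 1) * L) * Real.exp s * (1 + ‖y‖)) := by gcongr
    _ = _ := by rw [add_one_mul cB s, Real.exp_add, mul_comm cB s]; ring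

theorem enorm_rpow_le_of_norm_le {E F : Type*} [SeminormedAddCommGroup E]
    [SeminormedAddCommGroup F] {z : E} {y : F} {a b p : ℝ} (ha : 0 ≤ a) (hp : 1 ≤ p)
    (hz : ‖z‖ ≤ a * b * (1 + ‖y‖)) :
    ‖z‖ₑ ^ p ≤ 2 ^ (p - 1) * ENNReal.ofReal a ^ p * (ENNReal.ofReal b ^ p * (1 + ‖y‖ₑ ^ p)) := by
  have hp0 : 0 ≤ p := zero_le_one.trans hp
  have hz' : ‖z‖ₑ ≤ ENNReal.ofReal a * ENNReal.ofReal b * (1 + ‖y‖ₑ) := by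
    rw [← ofReal_norm, ← ofReal_norm, ← ENNReal.ofReal_one, ← ENNReal.ofReal_mul ha,
      ← ENNReal.ofReal_add zero_le_one (norm_nonneg _), ← ENNReal.ofReal_mul']
    · exact ENNReal.ofReal_le_ofReal hz
    · positivity
  calc ‖z‖ₑ ^ p ≤ (ENNReal.ofReal a * ENNReal.ofReal b * (1 + ‖y‖ₑ)) ^ p :=
        ENNReal.rpow_le_rpow hz' hp0
    _ = ENNReal.ofReal a ^ p * ENNReal.ofReal b ^ p * (1 + ‖y‖ₑ) ^ p := by
        rw [ENNReal.mul_rpow_of_nonneg _ _ hp0, ENNReal.mul_rpow_of_nonneg _ _ hp0]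
    _ ≤ ENNReal.ofReal a ^ p * ENNReal.ofReal b ^ p * (2 ^ (p - 1) * (1 + ‖y‖ₑ ^ p)) := by
        gcongr
        simpa using ENNReal.rpow_add_le_mul_rpow_add_rpow 1 ‖y‖ₑ hp
    _ = _ := by ring

theorem lintegral_exp_mul_abs_gaussianReal_le (t : ℝ) (v : ℝ≥0) :
    ∫⁻ x, ENNReal.ofReal (Real.exp (t * |x|)) ∂gaussianReal 0 v
      ≤ 2 * ENNReal.ofReal (Real.exp (v * t ^ 2 / 2)) := by
  have hmgf (s : ℝ) : ∫⁻ x, ENNReal.ofReal (Real.exp (s * x)) ∂gaussianReal 0 v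
      = ENNReal.ofReal (Real.exp (v * s ^ 2 / 2)) := by
    rw [← ofReal_integral_eq_lintegral_ofReal (integrable_exp_mul_gaussianReal s)
      (ae_of_all _ fun x => (Real.exp_pos _).le)]
    congr 1
    simpa [mgf] using congrFun (mgf_id_gaussianReal (μ := 0) (v := v)) s
  calc _ ≤ ∫⁻ x, ENNReal.ofReal (Real.exp (t * x)) + ENNReal.ofReal (Real.exp (-t * x))
          ∂gaussianReal 0 v := by
        refine lintegral_mono fun x => ?_
        rcases abs_cases x with ⟨hx, _⟩ | ⟨hx, _⟩
        · rw [hx]; exact le_self_add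
        · rw [hx, neg_mul_comm]; exact le_add_self
    _ = _ := by rw [lintegral_add_left (by fun_prop), hmgf, hmgf, neg_sq, two_mul]

theorem lintegral_exp_mul_sum_abs_le_of_iIndepFun {Ω ι : Type*} [Fintype ι]
    {mΩ : MeasurableSpace Ω} {P : Measure Ω} {ξ : ι → Ω → ℝ} (hξ : ∀ i, Measurable (ξ i))
    (hξind : iIndepFun ξ P) {v : ℝ≥0} (hξmap : ∀ i, P.map (ξ i) = gaussianReal 0 v) (t : ℝ) :
    ∫⁻ ω, ENNReal.ofReal (Real.exp (t * ∑ i, |ξ i ω|)) ∂P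
      ≤ (2 * ENNReal.ofReal (Real.exp (v * t ^ 2 / 2))) ^ Fintype.card ι := by
  have hf : Measurable fun x : ℝ => ENNReal.ofReal (Real.exp (t * |x|)) := by fun_prop
  calc ∫⁻ ω, ENNReal.ofReal (Real.exp (t * ∑ i, |ξ i ω|)) ∂P
      = ∫⁻ ω, ∏ i, ENNReal.ofReal (Real.exp (t * |ξ i ω|)) ∂P := by
        simp_rw [Finset.mul_sum, Real.exp_sum,
          ENNReal.ofReal_prod_of_nonneg fun i _ => (Real.exp_pos _).le]
    _ = ∏ i, ∫⁻ ω, ENNReal.ofReal (Real.exp (t * |ξ i ω|)) ∂P :=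
        lintegral_prod_eq_prod_lintegral_of_indepFun _ _ (hξind.comp _ fun _ => hf)
          fun i => hf.comp (hξ i)
    _ ≤ ∏ _i : ι, 2 * ENNReal.ofReal (Real.exp (v * t ^ 2 / 2)) := by
        refine Finset.prod_le_prod' fun i _ => ?_
        rw [← lintegral_map hf (hξ i), hξmap i]
        exact lintegral_exp_mul_abs_gaussianReal_le t v
    _ = _ := by rw [Finset.prod_const, Finset.card_univ]

theorem lintegral_rpow_le_of_norm_le_exp_sum_abs {Ω ι E F : Type*} [Fintype ι]
    [SeminormedAddCommGroup E] [NormedAddCommGroup F] [MeasurableSpace F]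
    [OpensMeasurableSpace F] {mΩ : MeasurableSpace Ω} {P : Measure Ω} [IsProbabilityMeasure P]
    {Y : Ω → F} (hY : Measurable Y) {ξ : ι → Ω → ℝ} (hξ : ∀ i, Measurable (ξ i))
    (hξind : iIndepFun ξ P) {v : ℝ≥0} (hξmap : ∀ i, P.map (ξ i) = gaussianReal 0 v)
    (hYξ : IndepFun Y (fun ω i => ξ i ω) P) {Z : Ω → E} {a κ p : ℝ} (ha : 0 ≤ a) (hp : 1 ≤ p)
    (hZ : ∀ ω, ‖Z ω‖ ≤ a * Real.exp (κ * ∑ i, |ξ i ω|) * (1 + ‖Y ω‖)) :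
    ∫⁻ ω, ‖Z ω‖ₑ ^ p ∂P
      ≤ 2 ^ (p - 1) * ENNReal.ofReal a ^ p
        * ((2 * ENNReal.ofReal (Real.exp (v * (p * κ) ^ 2 / 2))) ^ Fintype.card ι
          * (1 + ∫⁻ ω, ‖Y ω‖ₑ ^ p ∂P)) := by
  set Φ : (ι → ℝ) → ℝ≥0∞ := fun x => ENNReal.ofReal (Real.exp ((p * κ) * ∑ i, |x i|))
  set Ψ : F → ℝ≥0∞ := fun y => 1 + ‖y‖ₑ ^ p
  have hΦ : Measurable Φ := by fun_prop
  have hΨ : Measurable Ψ := by fun_prop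
  have hξvec : Measurable fun ω i => ξ i ω := measurable_pi_lambda _ hξ
  have hexp (ω : Ω) :
      ENNReal.ofReal (Real.exp (κ * ∑ i, |ξ i ω|)) ^ p = Φ (fun i => ξ i ω) := by
    rw [ENNReal.ofReal_rpow_of_nonneg (Real.exp_nonneg _) (by linarith), ← Real.exp_mul,
      mul_comm, ← mul_assoc]
  calc ∫⁻ ω, ‖Z ω‖ₑ ^ p ∂P
      ≤ ∫⁻ ω, 2 ^ (p - 1) * ENNReal.ofReal a ^ p * (Φ (fun i => ξ i ω) * Ψ (Y ω)) ∂P :=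
        lintegral_mono fun ω => hexp ω ▸ enorm_rpow_le_of_norm_le ha hp (hZ ω)
    _ = 2 ^ (p - 1) * ENNReal.ofReal a ^ p
          * ((∫⁻ ω, Φ (fun i => ξ i ω) ∂P) * ∫⁻ ω, Ψ (Y ω) ∂P) := by
        rw [lintegral_const_mul' _ _ (by finiteness)]
        exact congrArg _ (lintegral_mul_eq_lintegral_mul_lintegral_of_indepFun''
          (hΦ.comp hξvec).aemeasurable (hΨ.comp hY).aemeasurable (hYξ.symm.comp hΦ hΨ))
    _ ≤ _ := by
        gcongr
        · exact lintegral_exp_mul_sum_abs_le_of_iIndepFun hξ hξind hξmap (p * κ)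
        · rw [lintegral_add_left measurable_const, lintegral_const, measure_univ, mul_one]

theorem ENNReal.rpow_mul_one_add_le {c : ℝ≥0∞} (hc : 1 ≤ c) {q : ℝ} (hq0 : 0 ≤ q) (hq1 : q ≤ 1)
    (x : ℝ≥0∞) : (c * (1 + x)) ^ q ≤ c * (1 + x ^ q) := by
  rw [ENNReal.mul_rpow_of_nonneg _ _ hq0]
  gcongr
  · exact (ENNReal.rpow_le_rpow_of_exponent_le hc hq1).trans_eq (ENNReal.rpow_one c)
  · simpa using ENNReal.rpow_add_le_add_rpow 1 x hq0 hq1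

theorem tamed_gbm_continuous_extension_moment_bound_general {d m : ℕ}
    (T p K : ℝ) (hp : 2 ≤ p) (hK : 0 < K)
    (A : EuclideanSpace ℝ (Fin d) →L[ℝ] EuclideanSpace ℝ (Fin d))
    (B : Fin m → (EuclideanSpace ℝ (Fin d) →L[ℝ] EuclideanSpace ℝ (Fin d)))
    (F : EuclideanSpace ℝ (Fin d) → EuclideanSpace ℝ (Fin d))
    (g : Fin m → EuclideanSpace ℝ (Fin d) → EuclideanSpace ℝ (Fin d))
    (hg : ∀ i, ∀ y z : EuclideanSpace ℝ (Fin d), ‖g i y - g i z‖ ≤ K * ‖y - z‖)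
    (α : ℝ → EuclideanSpace ℝ (Fin d) → ℝ)
    (hα : ∀ (h : ℝ), 0 < h → ∀ y, 0 ≤ α h y ∧ α h y ≤ 1 ∧ h * ‖α h y • F y‖ ≤ 1) :
    ∃ C : ℝ, 0 < C ∧
      ∀ (h : ℝ), 0 < h → h ≤ T →
      ∀ (Ω : Type) (mΩ : MeasurableSpace Ω) (P : Measure Ω), IsProbabilityMeasure P →
      ∀ (Y : Ω → EuclideanSpace ℝ (Fin d)), Measurable Y →
        (∫⁻ ω, (‖Y ω‖₊ : ℝ≥0∞) ^ p ∂P ≠ ⊤) →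
      ∀ (ξ : Fin m → Ω → ℝ), (∀ i, Measurable (ξ i)) →
        iIndepFun ξ P →
        (∀ i, Measure.map (ξ i) P = gaussianReal 0 h.toNNReal) →
        IndepFun Y (fun ω i => ξ i ω) P →
        (∫⁻ ω, (‖gbmOp A B h (fun i => ξ i ω)
            (Y ω + h • (α h (Y ω) • F (Y ω) - ∑ i, B i (g i (Y ω)))
              + ∑ i, ξ i ω • g i (Y ω))‖₊ : ℝ≥0∞) ^ p ∂P) ^ (2 / p)
          ≤ ENNReal.ofReal C *
              (1 + (∫⁻ ω, (‖Y ω‖₊ : ℝ≥0∞) ^ p ∂P) ^ (2 / p)) := by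
  set L := K + ∑ i, ‖g i 0‖
  set a := (1 + (T * ∑ i, ‖B i‖ + 1) * L) * Real.exp (T * ‖A - (1 / 2 : ℝ) • ∑ i, B i ^ 2‖)
  set c : ℝ≥0∞ := 2 ^ (p - 1) * ENNReal.ofReal a ^ p
    * (2 * ENNReal.ofReal (Real.exp (T * (p * (∑ i, ‖B i‖ + 1)) ^ 2 / 2))) ^ m
  have hc : c ≠ ⊤ := by finiteness
  refine ⟨max 1 c.toReal, by positivity,
    fun h hh hhT Ω _ P _ Y hY _ ξ hξ hξind hξmap hYξ => ?_⟩
  have hL : 0 ≤ L := by positivity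
  have hgrowth (y : EuclideanSpace ℝ (Fin d)) (i : Fin m) : ‖g i y‖ ≤ L * (1 + ‖y‖) :=
    (norm_le_mul_one_add_norm_of_lipschitz hK.le (hg i) y).trans <| by
      gcongr
      exact add_le_add_right
        (Finset.single_le_sum (fun j _ => norm_nonneg (g j 0)) (Finset.mem_univ i)) K
  have ha : 0 ≤ a := by
    have : 0 ≤ T := hh.le.trans hhT
    positivity
  have hmoment := lintegral_rpow_le_of_norm_le_exp_sum_abs hY hξ hξind hξmap hYξ ha
    (show 1 ≤ p by linarith) fun ω => norm_gbmOp_tamed_le A B (fun i => ξ i ω) hh.le hhT hL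
      (hα h hh (Y ω)).2.2 (hgrowth (Y ω))
  rw [Fintype.card_fin, Real.coe_toNNReal _ hh.le, ← mul_assoc] at hmoment
  have hcC : c ≤ ENNReal.ofReal (max 1 c.toReal) := by
    rw [ENNReal.ofReal_max, ENNReal.ofReal_one, ENNReal.ofReal_toReal hc]
    exact le_max_right _ _
  calc _ ≤ (ENNReal.ofReal (max 1 c.toReal) * (1 + ∫⁻ ω, ‖Y ω‖ₑ ^ p ∂P)) ^ (2 / p) := by
        refine ENNReal.rpow_le_rpow (hmoment.trans ?_) (by positivity)
        gcongr
        refine le_trans ?_ hcC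
        simp only [c]
        gcongr
    _ ≤ _ := ENNReal.rpow_mul_one_add_le (by simp) (by positivity)
        (div_le_one_of_le₀ hp (by linarith)) _

/-- One-step `Lᵖ`-moment bound for the continuous-time extension of the
tamed GBM scheme: there is a constant `C > 0`, depending only on
`T, p, m, K, ‖A‖, ‖Bᵢ‖, ‖gᵢ(0)‖`, such that
`(𝔼‖Ȳ‖ᵖ)^{2/p} ≤ C (1 + (𝔼‖Y‖ᵖ)^{2/p})`. -/
theorem tamed_gbm_continuous_extension_moment_bound {d m : ℕ} (hd : 1 ≤ d) (hm : 1 ≤ m)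
    (T p K : ℝ) (hT : 0 < T) (hp : 2 ≤ p) (hK : 0 < K)
    (A : EuclideanSpace ℝ (Fin d) →L[ℝ] EuclideanSpace ℝ (Fin d))
    (B : Fin m → (EuclideanSpace ℝ (Fin d) →L[ℝ] EuclideanSpace ℝ (Fin d)))
    (hAB : ∀ i, A * B i = B i * A) (hBB : ∀ i j, B i * B j = B j * B i)
    (F : EuclideanSpace ℝ (Fin d) → EuclideanSpace ℝ (Fin d))
    (g : Fin m → EuclideanSpace ℝ (Fin d) → EuclideanSpace ℝ (Fin d))
    (hg : ∀ i, ∀ y z : EuclideanSpace ℝ (Fin d), ‖g i y - g i z‖ ≤ K * ‖y - z‖)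
    (α : ℝ → EuclideanSpace ℝ (Fin d) → ℝ)
    (hα : ∀ (h : ℝ), 0 < h → ∀ y, 0 ≤ α h y ∧ α h y ≤ 1 ∧ h * ‖α h y • F y‖ ≤ 1) :
    ∃ C : ℝ, 0 < C ∧
      ∀ (h : ℝ), 0 < h → h ≤ T →
      ∀ (Ω : Type) (mΩ : MeasurableSpace Ω) (P : Measure Ω), IsProbabilityMeasure P →
      ∀ (Y : Ω → EuclideanSpace ℝ (Fin d)), Measurable Y →
        (∫⁻ ω, (‖Y ω‖₊ : ℝ≥0∞) ^ p ∂P ≠ ⊤) →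
      ∀ (ξ : Fin m → Ω → ℝ), (∀ i, Measurable (ξ i)) →
        iIndepFun ξ P →
        (∀ i, Measure.map (ξ i) P = gaussianReal 0 h.toNNReal) →
        IndepFun Y (fun ω i => ξ i ω) P →
        (∫⁻ ω, (‖gbmOp A B h (fun i => ξ i ω)
            (Y ω + h • (α h (Y ω) • F (Y ω) - ∑ i, B i (g i (Y ω)))
              + ∑ i, ξ i ω • g i (Y ω))‖₊ : ℝ≥0∞) ^ p ∂P) ^ (2 / p)
          ≤ ENNReal.ofReal C *
              (1 + (∫⁻ ω, (‖Y ω‖₊ : ℝ≥0∞) ^ p ∂P) ^ (2 / p)) :=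
  tamed_gbm_continuous_extension_moment_bound_general T p K hp hK A B F g hg α hα
end
end
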